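/- The unification transformation rules (Remove, Decomp, Conflict, Choose, Coalesce, Swap, Merge, Replace, Merep) terminate on every finite unification problem. -/

import Mathlib

set_option linter.unusedSectionVars false


/-- Finite first-order terms. -/
inductive Tm (F V : Type) : Type
  | var : V → Tm F V
  | app : F → List (Tm F V) → Tm F V

namespace Tm
variable {F V W : Type}

/-- Application of a substitution to a term. -/
def subst (σ : V → Tm F W) : Tm F V → Tm F W
  | .var x => σ x
  | .app f l => .app f (l.attach.map fun t => t.1.subst σ)
  decreasing_by simp only [Tm.app.sizeOf_spec]; have := List.sizeOf_lt_of_mem t.2; omega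

/-- Size of a term (variables have size 0). -/
def size : Tm F V → ℕ
  | .var _ => 0
  | .app _ l => 1 + (l.attach.map fun t => t.1.size).sum
  decreasing_by simp only [Tm.app.sizeOf_spec]; have := List.sizeOf_lt_of_mem t.2; omega

/-- `x` occurs in `t`. -/
inductive HasVar (x : V) : Tm F V → Prop
  | var : HasVar x (.var x)
  | app {f l t} : t ∈ l → HasVar x t → HasVar x (.app f l)

/-- `t` is not a variable. -/
def NonVar (t : Tm F V) : Prop := ∀ z, t ≠ .var z

end Tm

section Unification

variable {F V : Type} [DecidableEq V]

/-- An equation is an oriented pair of terms; a unification problem is a finite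
multiset of equations. -/
abbrev Eqn (F V : Type) := Tm F V × Tm F V

/-- The substitution `{x ↦ s}`. -/
def single (x : V) (s : Tm F V) : V → Tm F V := fun z => if z = x then s else .var z

/-- Apply `{x ↦ s}` to every term of a problem. -/
def substProb (x : V) (s : Tm F V) (P : Multiset (Eqn F V)) : Multiset (Eqn F V) :=
  P.map fun e => (e.1.subst (single x s), e.2.subst (single x s))

/-- `x` occurs in the problem `P`. -/
def VarInProb (x : V) (P : Multiset (Eqn F V)) : Prop :=
  ∃ e ∈ P, Tm.HasVar x e.1 ∨ Tm.HasVar x e.2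

/-- The unification rules Remove, Decomp, Conflict, Choose, Coalesce, Swap,
Merge, Replace (all rules except Merep); `none` stands for `⊥`. -/
inductive UStep1 : Multiset (Eqn F V) → Option (Multiset (Eqn F V)) → Prop
  | remove (s P) : UStep1 ((s, s) ::ₘ P) (some P)
  | decomp (f ss ts P) : ss.length = ts.length →
      UStep1 ((.app f ss, .app f ts) ::ₘ P) (some ((ss.zip ts : List (Eqn F V)) + P))
  | conflict (f g ss ts P) : f ≠ g ∨ ss.length ≠ ts.length →
      UStep1 ((.app f ss, .app g ts) ::ₘ P) none
  | choose (x y P) : ¬ VarInProb x P → VarInProb y P →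
      UStep1 ((.var y, .var x) ::ₘ P) (some ((.var x, .var y) ::ₘ P))
  | coalesce (x y P) : x ≠ y → VarInProb x P → VarInProb y P →
      UStep1 ((.var x, .var y) ::ₘ P) (some ((.var x, .var y) ::ₘ substProb x (.var y) P))
  | swap (u x P) : u.NonVar → UStep1 ((u, .var x) ::ₘ P) (some ((.var x, u) ::ₘ P))
  | merge (x s t P) : 0 < s.size → s.size ≤ t.size →
      UStep1 ((.var x, s) ::ₘ (.var x, t) ::ₘ P)
        (some ((.var x, s) ::ₘ (s, t) ::ₘ P))
  | replace (x s P) : ¬ Tm.HasVar x s → s.NonVar → VarInProb x P →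
      UStep1 ((.var x, s) ::ₘ P) (some ((.var x, s) ::ₘ substProb x s P))

/-- The full set of unification rules: the rules above together with Merep,
which only applies when no other rule applies. -/
inductive UStep : Multiset (Eqn F V) → Option (Multiset (Eqn F V)) → Prop
  | base {P Q} : UStep1 P Q → UStep P Q
  | merep (x y s P) : Tm.HasVar x s → s.NonVar → ¬ Tm.HasVar y s → ¬ VarInProb y P →
      (∀ Q, ¬ UStep1 ((.var y, .var x) ::ₘ (.var x, s) ::ₘ P) Q) →
      UStep ((.var y, .var x) ::ₘ (.var x, s) ::ₘ P)
        (some ((.var y, s) ::ₘ (.var x, s) ::ₘ P))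

end Unification


section Aux

namespace Tm
variable {F V : Type}

/-- Custom induction principle for nested terms. -/
theorem ind' {motive : Tm F V → Prop} (hvar : ∀ x, motive (var x))
    (happ : ∀ f l, (∀ t ∈ l, motive t) → motive (app f l)) : ∀ t, motive t := by
  have key : ∀ n (t : Tm F V), sizeOf t < n → motive t := by
    intro n
    induction n with
    | zero => intro t ht; omega
    | succ n ih =>
      intro t ht
      cases t with
      | var x => exact hvar x
      | app f l =>
        refine happ f l (fun s hs => ih s ?_)
        have := List.sizeOf_lt_of_mem hs
        simp only [Tm.app.sizeOf_spec] at ht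
        omega
  exact fun t => key (sizeOf t + 1) t (Nat.lt_succ_self _)

@[simp] theorem subst_var (σ : V → Tm F V) (x : V) : (Tm.var x).subst σ = σ x := by
  rw [subst]

@[simp] theorem subst_app (σ : V → Tm F V) (f : F) (l : List (Tm F V)) :
    (Tm.app f l).subst σ = Tm.app f (l.map (fun t => t.subst σ)) := by
  rw [subst, List.attach_map_val]

@[simp] theorem size_var (x : V) : (Tm.var x : Tm F V).size = 0 := by rw [size]

@[simp] theorem size_app (f : F) (l : List (Tm F V)) :
    (Tm.app f l).size = 1 + (l.map size).sum := by
  rw [size, List.attach_map_val]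

@[simp] theorem hasVar_var {x y : V} : HasVar x (Tm.var y : Tm F V) ↔ x = y := by
  constructor
  · rintro ⟨⟩; rfl
  · rintro rfl; exact HasVar.var

theorem hasVar_app {x : V} {f : F} {l : List (Tm F V)} :
    HasVar x (Tm.app f l) ↔ ∃ t ∈ l, HasVar x t := by
  constructor
  · intro h
    cases h with
    | app ht h => exact ⟨_, ht, h⟩
  · rintro ⟨t, ht, h⟩; exact HasVar.app ht h

theorem size_pos_nonVar {s : Tm F V} (h : 0 < s.size) : s.NonVar := by
  rintro z rfl; simp at h

theorem nonVar_app {f : F} {l : List (Tm F V)} : (Tm.app f l : Tm F V).NonVar := by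
  rintro z h; cases h

theorem size_lt_of_mem {s : Tm F V} {f : F} {l : List (Tm F V)} (h : s ∈ l) :
    s.size < (Tm.app f l).size := by
  have : s.size ≤ (l.map size).sum :=
    List.single_le_sum (fun x _ => Nat.zero_le x) _ (List.mem_map_of_mem h)
  simp only [size_app]; omega

variable [DecidableEq V]

/-- Finset of variables of a term. -/
def tvars : Tm F V → Finset V
  | .var x => {x}
  | .app _ l => (l.attach.map fun t => t.1.tvars).foldr (· ∪ ·) ∅
  decreasing_by simp only [Tm.app.sizeOf_spec]; have := List.sizeOf_lt_of_mem t.2; omega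

@[simp] theorem tvars_var (x : V) : (Tm.var x : Tm F V).tvars = {x} := by rw [tvars]

theorem tvars_app (f : F) (l : List (Tm F V)) :
    (Tm.app f l).tvars = (l.map tvars).foldr (· ∪ ·) ∅ := by
  rw [tvars, List.attach_map_val]

theorem mem_tvars {x : V} : ∀ {t : Tm F V}, x ∈ t.tvars ↔ HasVar x t := by
  have : ∀ t : Tm F V, x ∈ t.tvars ↔ HasVar x t := by
    refine Tm.ind' (by simp) ?_
    intro f l ih
    rw [tvars_app, hasVar_app]
    induction l with
    | nil => simp
    | cons s l ihl =>
      simp only [List.map_cons, List.foldr_cons, Finset.mem_union, List.mem_cons]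
      rw [ih s List.mem_cons_self,
        ihl (fun t ht => ih t (List.mem_cons_of_mem _ ht))]
      constructor
      · rintro (h | ⟨t, ht, h⟩)
        · exact ⟨s, Or.inl rfl, h⟩
        · exact ⟨t, Or.inr ht, h⟩
      · rintro ⟨t, (rfl | ht), h⟩
        · exact Or.inl h
        · exact Or.inr ⟨t, ht, h⟩
  exact fun {t} => this t

/-- Variables of a substituted term. -/
theorem hasVar_subst {z x : V} {s : Tm F V} :
    ∀ {t : Tm F V}, HasVar z (t.subst (single x s)) ↔
      (HasVar z t ∧ z ≠ x) ∨ (HasVar x t ∧ HasVar z s) := by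
  have : ∀ t : Tm F V, HasVar z (t.subst (single x s)) ↔
      (HasVar z t ∧ z ≠ x) ∨ (HasVar x t ∧ HasVar z s) := by
    refine Tm.ind' ?_ ?_
    · intro y
      by_cases hyx : y = x
      · subst hyx
        simp only [subst_var, single, if_pos rfl, hasVar_var]
        constructor
        · intro h; exact Or.inr ⟨trivial, h⟩
        · rintro (⟨rfl, h⟩ | ⟨-, h⟩)
          · exact absurd rfl h
          · exact h
      · simp only [subst_var, single, if_neg hyx, hasVar_var]
        constructor
        · intro hzy
          exact Or.inl ⟨hzy, fun hzx => hyx (hzy ▸ hzx)⟩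
        · rintro (⟨hzy, -⟩ | ⟨hxy, -⟩)
          · exact hzy
          · exact absurd hxy.symm hyx
    · intro f l ih
      simp only [subst_app, hasVar_app, List.mem_map]
      constructor
      · rintro ⟨t', ⟨t, ht, rfl⟩, h⟩
        rcases (ih t ht).1 h with ⟨h1, h2⟩ | ⟨h1, h2⟩
        · exact Or.inl ⟨⟨t, ht, h1⟩, h2⟩
        · exact Or.inr ⟨⟨t, ht, h1⟩, h2⟩
      · rintro (⟨⟨t, ht, h1⟩, h2⟩ | ⟨⟨t, ht, h1⟩, h2⟩)
        · exact ⟨_, ⟨t, ht, rfl⟩, (ih t ht).2 (Or.inl ⟨h1, h2⟩)⟩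
        · exact ⟨_, ⟨t, ht, rfl⟩, (ih t ht).2 (Or.inr ⟨h1, h2⟩)⟩
  exact fun {t} => this t

end Tm

end Aux


section Aux2

open Classical in
/-- The single-step multiset extension of `<` on `ℕ`: replace one element by
finitely many strictly smaller ones. -/
def Rlt (N M : Multiset ℕ) : Prop :=
  ∃ a Y X, M = a ::ₘ X ∧ N = Y + X ∧ ∀ y ∈ Y, y < a

theorem rlt_acc_add {a : ℕ} (iha : ∀ b < a, ∀ M, Acc Rlt M → Acc Rlt (b ::ₘ M)) :
    ∀ Y : Multiset ℕ, (∀ y ∈ Y, y < a) → ∀ M, Acc Rlt M → Acc Rlt (Y + M) := by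
  intro Y
  induction Y using Multiset.induction with
  | empty => intro _ M hM; simpa using hM
  | cons y Y ihY =>
    intro hY M hM
    rw [Multiset.cons_add]
    exact iha y (hY y (Multiset.mem_cons_self _ _)) _
      (ihY (fun z hz => hY z (Multiset.mem_cons_of_mem hz)) M hM)

theorem rlt_acc_cons : ∀ a (M : Multiset ℕ), Acc Rlt M → Acc Rlt (a ::ₘ M) := by
  intro a
  induction a using Nat.strong_induction_on with
  | _ a iha =>
    intro M hM
    induction hM with
    | intro M hM ihM =>
      constructor
      rintro N ⟨c, Y, X, hMX, rfl, hY⟩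
      rcases Multiset.cons_eq_cons.mp hMX with ⟨rfl, rfl⟩ | ⟨hne, X', hM', hX'⟩
      · exact rlt_acc_add (fun b hb => iha b hb) Y hY M (Acc.intro M hM)
      · subst hX' hM'
        have hstep : Rlt (Y + X') (c ::ₘ X') := ⟨c, Y, X', rfl, rfl, hY⟩
        have := ihM _ hstep
        rw [show Y + a ::ₘ X' = a ::ₘ (Y + X') from Multiset.add_cons _ _ _]
        exact this

theorem rlt_wf : WellFounded (Rlt) := by
  constructor
  intro M
  induction M using Multiset.induction with
  | empty =>
    constructor
    rintro N ⟨a, Y, X, hM, -, -⟩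
    exact absurd hM (by simp)
  | cons a M ih => exact rlt_acc_cons a M ih

variable {F V : Type} [DecidableEq V]

theorem varInProb_cons {z : V} {e : Eqn F V} {P : Multiset (Eqn F V)} :
    VarInProb z (e ::ₘ P) ↔ (Tm.HasVar z e.1 ∨ Tm.HasVar z e.2) ∨ VarInProb z P := by
  constructor
  · rintro ⟨e', he', h⟩
    rcases Multiset.mem_cons.mp he' with rfl | he'
    · exact Or.inl h
    · exact Or.inr ⟨e', he', h⟩
  · rintro (h | ⟨e', he', h⟩)
    · exact ⟨e, Multiset.mem_cons_self _ _, h⟩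
    · exact ⟨e', Multiset.mem_cons_of_mem he', h⟩

theorem varInProb_add {z : V} {P Q : Multiset (Eqn F V)} :
    VarInProb z (P + Q) ↔ VarInProb z P ∨ VarInProb z Q := by
  constructor
  · rintro ⟨e, he, h⟩
    rcases Multiset.mem_add.mp he with he | he
    · exact Or.inl ⟨e, he, h⟩
    · exact Or.inr ⟨e, he, h⟩
  · rintro (⟨e, he, h⟩ | ⟨e, he, h⟩)
    · exact ⟨e, Multiset.mem_add.mpr (Or.inl he), h⟩
    · exact ⟨e, Multiset.mem_add.mpr (Or.inr he), h⟩

theorem varInProb_coe {z : V} {L : List (Eqn F V)} :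
    VarInProb z (L : Multiset (Eqn F V)) ↔ ∃ e ∈ L, Tm.HasVar z e.1 ∨ Tm.HasVar z e.2 := by
  constructor
  · rintro ⟨e, he, h⟩; exact ⟨e, Multiset.mem_coe.mp he, h⟩
  · rintro ⟨e, he, h⟩; exact ⟨e, Multiset.mem_coe.mpr he, h⟩

/-- Variables of a zip of equal-length lists. -/
theorem varInProb_zip {z : V} {ss ts : List (Tm F V)} (h : ss.length = ts.length) :
    VarInProb z ((ss.zip ts : List (Eqn F V)) : Multiset (Eqn F V)) ↔
      (∃ s ∈ ss, Tm.HasVar z s) ∨ ∃ t ∈ ts, Tm.HasVar z t := by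
  rw [varInProb_coe]
  induction ss generalizing ts with
  | nil =>
    cases ts with
    | nil => simp
    | cons t ts => simp at h
  | cons s ss ih =>
    cases ts with
    | nil => simp at h
    | cons t ts =>
      simp only [List.length_cons, Nat.succ.injEq] at h
      simp only [List.zip_cons_cons, List.mem_cons]
      constructor
      · rintro ⟨e, (rfl | he), hv⟩
        · rcases hv with hv | hv
          · exact Or.inl ⟨s, Or.inl rfl, hv⟩
          · exact Or.inr ⟨t, Or.inl rfl, hv⟩
        · rcases (ih h).mp ⟨e, he, hv⟩ with ⟨s', hs', hv⟩ | ⟨t', ht', hv⟩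
          · exact Or.inl ⟨s', Or.inr hs', hv⟩
          · exact Or.inr ⟨t', Or.inr ht', hv⟩
      · rintro (⟨s', (rfl | hs'), hv⟩ | ⟨t', (rfl | ht'), hv⟩)
        · exact ⟨(s', t), Or.inl rfl, Or.inl hv⟩
        · rcases (ih h).mpr (Or.inl ⟨s', hs', hv⟩) with ⟨e, he, hv'⟩
          exact ⟨e, Or.inr he, hv'⟩
        · exact ⟨(s, t'), Or.inl rfl, Or.inr hv⟩
        · rcases (ih h).mpr (Or.inr ⟨t', ht', hv⟩) with ⟨e, he, hv'⟩
          exact ⟨e, Or.inr he, hv'⟩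

theorem substProb_cons (x : V) (s : Tm F V) (e : Eqn F V) (P : Multiset (Eqn F V)) :
    substProb x s (e ::ₘ P) =
      (e.1.subst (single x s), e.2.subst (single x s)) ::ₘ substProb x s P := by
  simp [substProb]

theorem varInProb_substProb {z x : V} {s : Tm F V} {P : Multiset (Eqn F V)} :
    VarInProb z (substProb x s P) ↔
      (VarInProb z P ∧ z ≠ x) ∨ (VarInProb x P ∧ Tm.HasVar z s) := by
  constructor
  · rintro ⟨e', he', h⟩
    rcases Multiset.mem_map.mp he' with ⟨e, he, rfl⟩
    rcases h with h | h <;>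
    · rcases Tm.hasVar_subst.mp h with ⟨h1, h2⟩ | ⟨h1, h2⟩
      · exact Or.inl ⟨⟨e, he, by tauto⟩, h2⟩
      · exact Or.inr ⟨⟨e, he, by tauto⟩, h2⟩
  · rintro (⟨⟨e, he, h⟩, hzx⟩ | ⟨⟨e, he, h⟩, hzs⟩) <;>
      refine ⟨_, Multiset.mem_map_of_mem _ he, ?_⟩ <;> rcases h with h | h
    · exact Or.inl (Tm.hasVar_subst.mpr (Or.inl ⟨h, hzx⟩))
    · exact Or.inr (Tm.hasVar_subst.mpr (Or.inl ⟨h, hzx⟩))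
    · exact Or.inl (Tm.hasVar_subst.mpr (Or.inr ⟨h, hzs⟩))
    · exact Or.inr (Tm.hasVar_subst.mpr (Or.inr ⟨h, hzs⟩))

/-- The finset of variables of a problem. -/
noncomputable def pv (P : Multiset (Eqn F V)) : Finset V :=
  (P.map fun e => e.1.tvars ∪ e.2.tvars).sup

theorem mem_pv {z : V} {P : Multiset (Eqn F V)} : z ∈ pv P ↔ VarInProb z P := by
  induction P using Multiset.induction with
  | empty =>
    simp only [pv, Multiset.map_zero, Multiset.sup_zero]
    constructor
    · intro h; exact absurd h (by simp)
    · rintro ⟨e, he, -⟩; exact absurd he (by simp)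
  | cons e P ih =>
    rw [varInProb_cons, ← ih]
    simp only [pv, Multiset.map_cons, Multiset.sup_cons]
    simp only [Finset.sup_eq_union, Finset.mem_union, Tm.mem_tvars]
    all_goals tauto

/-- `x` is a solved variable of `P`. -/
def SolvedVar (x : V) (P : Multiset (Eqn F V)) : Prop :=
  ∃ t Q, P = (Tm.var x, t) ::ₘ Q ∧ ¬ Tm.HasVar x t ∧ ¬ VarInProb x Q

open Classical in
/-- The finset of unsolved variables of `P`. -/
noncomputable def unsolved (P : Multiset (Eqn F V)) : Finset V :=
  (pv P).filter (fun z => ¬ SolvedVar z P)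

/-- `a` is the left side of a stuck variable–variable equation of `P`. -/
def StuckIn (a : V) (P : Multiset (Eqn F V)) : Prop :=
  ∃ b Q, a ≠ b ∧ P = (Tm.var a, Tm.var b) ::ₘ Q ∧ ¬ VarInProb a Q

open Classical in
/-- The finset of stuck variables of `P`. -/
noncomputable def stuck (P : Multiset (Eqn F V)) : Finset V :=
  (pv P).filter (fun a => StuckIn a P)

theorem stuckIn_solvedVar {a : V} {P : Multiset (Eqn F V)} (h : StuckIn a P) :
    SolvedVar a P := by
  obtain ⟨b, Q, hab, rfl, hQ⟩ := h
  exact ⟨Tm.var b, Q, rfl, by simp [Tm.hasVar_var, hab], hQ⟩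

end Aux2


section Aux3

variable {F V : Type} [DecidableEq V]

theorem stuckIn_varInProb {a : V} {P : Multiset (Eqn F V)} (h : StuckIn a P) :
    VarInProb a P := by
  obtain ⟨b, Q, hab, rfl, hQ⟩ := h
  exact ⟨_, Multiset.mem_cons_self _ _, Or.inl Tm.HasVar.var⟩

theorem mem_stuck {a : V} {P : Multiset (Eqn F V)} : a ∈ stuck P ↔ StuckIn a P := by
  classical
  simp only [stuck, Finset.mem_filter, mem_pv]
  exact ⟨fun h => h.2, fun h => ⟨stuckIn_varInProb h, h⟩⟩

theorem mem_unsolved {z : V} {P : Multiset (Eqn F V)} :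
    z ∈ unsolved P ↔ VarInProb z P ∧ ¬ SolvedVar z P := by
  classical
  simp only [unsolved, Finset.mem_filter, mem_pv]

theorem not_varInProb_cons {z : V} {e : Eqn F V} {P : Multiset (Eqn F V)} :
    ¬ VarInProb z (e ::ₘ P) ↔ ¬ Tm.HasVar z e.1 ∧ ¬ Tm.HasVar z e.2 ∧ ¬ VarInProb z P := by
  rw [varInProb_cons]; tauto

theorem solvedVar_cons {z : V} {e : Eqn F V} {P : Multiset (Eqn F V)} :
    SolvedVar z (e ::ₘ P) ↔
      (∃ t, e = (Tm.var z, t) ∧ ¬ Tm.HasVar z t ∧ ¬ VarInProb z P) ∨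
      (¬ Tm.HasVar z e.1 ∧ ¬ Tm.HasVar z e.2 ∧ SolvedVar z P) := by
  constructor
  · rintro ⟨t, Q, hPQ, hvt, hvQ⟩
    rcases Multiset.cons_eq_cons.mp hPQ with ⟨h1, h2⟩ | ⟨hne, R, hPR, hQR⟩
    · exact Or.inl ⟨t, h1, hvt, h2 ▸ hvQ⟩
    · subst hQR
      obtain ⟨h1, h2, h3⟩ := not_varInProb_cons.mp hvQ
      exact Or.inr ⟨h1, h2, t, R, hPR, hvt, h3⟩
  · rintro (⟨t, rfl, hvt, hvP⟩ | ⟨h1, h2, t, R, rfl, hvt, hvR⟩)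
    · exact ⟨t, P, rfl, hvt, hvP⟩
    · exact ⟨t, e ::ₘ R, by rw [Multiset.cons_swap], hvt,
        not_varInProb_cons.mpr ⟨h1, h2, hvR⟩⟩

theorem stuckIn_cons {a : V} {e : Eqn F V} {P : Multiset (Eqn F V)} :
    StuckIn a (e ::ₘ P) ↔
      (∃ b, a ≠ b ∧ e = (Tm.var a, Tm.var b) ∧ ¬ VarInProb a P) ∨
      (¬ Tm.HasVar a e.1 ∧ ¬ Tm.HasVar a e.2 ∧ StuckIn a P) := by
  constructor
  · rintro ⟨b, Q, hab, hPQ, hvQ⟩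
    rcases Multiset.cons_eq_cons.mp hPQ with ⟨h1, h2⟩ | ⟨hne, R, hPR, hQR⟩
    · exact Or.inl ⟨b, hab, h1, fun h => hvQ (h2 ▸ h)⟩
    · subst hQR
      obtain ⟨h1, h2, h3⟩ := not_varInProb_cons.mp hvQ
      exact Or.inr ⟨h1, h2, b, R, hab, hPR, h3⟩
  · rintro (⟨b, hab, rfl, hvP⟩ | ⟨h1, h2, b, R, hab, rfl, hvR⟩)
    · exact ⟨b, P, hab, rfl, hvP⟩
    · exact ⟨b, e ::ₘ R, hab, by rw [Multiset.cons_swap],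
        not_varInProb_cons.mpr ⟨h1, h2, hvR⟩⟩

theorem solvedVar_cons_of_not {z : V} {e : Eqn F V} {P : Multiset (Eqn F V)}
    (h1 : ¬ Tm.HasVar z e.1) (h2 : ¬ Tm.HasVar z e.2) :
    SolvedVar z (e ::ₘ P) ↔ SolvedVar z P := by
  rw [solvedVar_cons]
  constructor
  · rintro (⟨t, rfl, -, -⟩ | ⟨-, -, h⟩)
    · exact absurd Tm.HasVar.var h1
    · exact h
  · intro h; exact Or.inr ⟨h1, h2, h⟩

theorem stuckIn_cons_of_not {a : V} {e : Eqn F V} {P : Multiset (Eqn F V)}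
    (h1 : ¬ Tm.HasVar a e.1) (h2 : ¬ Tm.HasVar a e.2) :
    StuckIn a (e ::ₘ P) ↔ StuckIn a P := by
  rw [stuckIn_cons]
  constructor
  · rintro (⟨b, hab, rfl, -⟩ | ⟨-, -, h⟩)
    · exact absurd Tm.HasVar.var h1
    · exact h
  · intro h; exact Or.inr ⟨h1, h2, h⟩

theorem solvedVar_add_of_not {z : V} {L P : Multiset (Eqn F V)}
    (hL : ¬ VarInProb z L) : SolvedVar z (L + P) ↔ SolvedVar z P := by
  induction L using Multiset.induction with
  | empty => simp
  | cons e L ih =>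
    obtain ⟨h1, h2, h3⟩ := not_varInProb_cons.mp hL
    rw [Multiset.cons_add, solvedVar_cons_of_not h1 h2, ih h3]

theorem stuckIn_add_of_not {a : V} {L P : Multiset (Eqn F V)}
    (hL : ¬ VarInProb a L) : StuckIn a (L + P) ↔ StuckIn a P := by
  induction L using Multiset.induction with
  | empty => simp
  | cons e L ih =>
    obtain ⟨h1, h2, h3⟩ := not_varInProb_cons.mp hL
    rw [Multiset.cons_add, stuckIn_cons_of_not h1 h2, ih h3]

/-- Unsolved variables are monotone along steps that shrink variables and
preserve solvedness. -/
theorem unsolved_subset {P Q : Multiset (Eqn F V)}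
    (hv : ∀ z, VarInProb z Q → VarInProb z P)
    (hs : ∀ z, VarInProb z Q → SolvedVar z P → SolvedVar z Q) :
    unsolved Q ⊆ unsolved P := by
  intro z hz
  rw [mem_unsolved] at hz ⊢
  exact ⟨hv z hz.1, fun h => hz.2 (hs z hz.1 h)⟩

theorem card_lt_of_mem_not_mem {s t : Finset V} (h : s ⊆ t) {x : V}
    (hxt : x ∈ t) (hxs : x ∉ s) : s.card < t.card :=
  Finset.card_lt_card ⟨h, fun hts => hxs (hts hxt)⟩

/-- Whether a term is a variable. -/
def isVarB : Tm F V → Bool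
  | .var _ => true
  | .app _ _ => false

@[simp] theorem isVarB_var (z : V) : (isVarB (Tm.var z : Tm F V)) = true := rfl

@[simp] theorem isVarB_app (f : F) (l : List (Tm F V)) :
    (isVarB (Tm.app f l : Tm F V)) = false := rfl

theorem isVarB_eq_false {u : Tm F V} (h : u.NonVar) : isVarB u = false := by
  cases u with
  | var z => exact absurd rfl (h z)
  | app f l => rfl

/-- Weight of an equation. -/
def wEq (e : Eqn F V) : ℕ := max e.1.size e.2.size

/-- The measure components. -/
def Mw (P : Multiset (Eqn F V)) : Multiset ℕ := P.map wEq

def n3 (P : Multiset (Eqn F V)) : ℕ :=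
  Multiset.countP (fun e => (!isVarB e.1 && isVarB e.2) = true) P

def n4 (P : Multiset (Eqn F V)) : ℕ :=
  Multiset.countP (fun e => isVarB e.1 = true) P

noncomputable def meas (P : Multiset (Eqn F V)) : ℕ × ℕ × Multiset ℕ × ℕ × ℕ :=
  ((unsolved P).card, (stuck P).card, Mw P, n3 P, n4 P)

/-- Lexicographic order on the measure. -/
def MeasLt : (ℕ × ℕ × Multiset ℕ × ℕ × ℕ) → (ℕ × ℕ × Multiset ℕ × ℕ × ℕ) → Prop :=
  Prod.Lex (· < ·) (Prod.Lex (· < ·) (Prod.Lex Rlt (Prod.Lex (· < ·) (· < ·))))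

theorem measLt_wf : WellFounded (MeasLt) :=
  WellFounded.prod_lex wellFounded_lt <|
    WellFounded.prod_lex wellFounded_lt <|
      WellFounded.prod_lex rlt_wf <|
        WellFounded.prod_lex wellFounded_lt wellFounded_lt

theorem mlt1 {a a' b b' c c' d d' e e'} (h : a < a') :
    MeasLt (a, b, c, d, e) (a', b', c', d', e') := Prod.Lex.left _ _ h

theorem mlt2 {a a' b b' c c' d d' e e'} (ha : a ≤ a') (h : b < b') :
    MeasLt (a, b, c, d, e) (a', b', c', d', e') := by
  rcases lt_or_eq_of_le ha with ha | rfl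
  · exact mlt1 ha
  · exact Prod.Lex.right _ (Prod.Lex.left _ _ h)

theorem mlt3 {a a' b b' c c' d d' e e'} (ha : a ≤ a') (hb : b ≤ b') (h : Rlt c c') :
    MeasLt (a, b, c, d, e) (a', b', c', d', e') := by
  rcases lt_or_eq_of_le ha with ha | rfl
  · exact mlt1 ha
  rcases lt_or_eq_of_le hb with hb | rfl
  · exact Prod.Lex.right _ (Prod.Lex.left _ _ hb)
  · exact Prod.Lex.right _ (Prod.Lex.right _ (Prod.Lex.left _ _ h))

theorem mlt4 {a a' b b' c d d' e e'} (ha : a ≤ a') (hb : b ≤ b') (h : d < d') :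
    MeasLt (a, b, c, d, e) (a', b', c, d', e') := by
  rcases lt_or_eq_of_le ha with ha | rfl
  · exact mlt1 ha
  rcases lt_or_eq_of_le hb with hb | rfl
  · exact Prod.Lex.right _ (Prod.Lex.left _ _ hb)
  · exact Prod.Lex.right _ (Prod.Lex.right _ (Prod.Lex.right _ (Prod.Lex.left _ _ h)))

theorem mlt5 {a a' b b' c d e e'} (ha : a ≤ a') (hb : b ≤ b') (h : e < e') :
    MeasLt (a, b, c, d, e) (a', b', c, d, e') := by
  rcases lt_or_eq_of_le ha with ha | rfl
  · exact mlt1 ha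
  rcases lt_or_eq_of_le hb with hb | rfl
  · exact Prod.Lex.right _ (Prod.Lex.left _ _ hb)
  · exact Prod.Lex.right _ (Prod.Lex.right _ (Prod.Lex.right _ (Prod.Lex.right _ h)))

end Aux3


section Aux4

variable {F V : Type} [DecidableEq V]

theorem meas_remove (s : Tm F V) (P : Multiset (Eqn F V)) :
    MeasLt (meas P) (meas ((s, s) ::ₘ P)) := by
  have hv : ∀ z, VarInProb z P → VarInProb z ((s, s) ::ₘ P) :=
    fun z h => varInProb_cons.mpr (Or.inr h)
  have hs : ∀ z, VarInProb z P → SolvedVar z ((s, s) ::ₘ P) → SolvedVar z P := by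
    intro z _ h
    rcases solvedVar_cons.mp h with ⟨t, he, hvt, -⟩ | ⟨-, -, h⟩
    · rw [Prod.mk.injEq] at he
      obtain ⟨h1, h2⟩ := he
      exact absurd (h2 ▸ h1 ▸ Tm.HasVar.var) hvt
    · exact h
  have hsub := unsolved_subset hv hs
  by_cases hex : ∃ a ∈ stuck P, Tm.HasVar a s
  · obtain ⟨a, haP, has⟩ := hex
    have hsolA : SolvedVar a P := stuckIn_solvedVar (mem_stuck.mp haP)
    have haB : a ∈ unsolved ((s, s) ::ₘ P) := by
      rw [mem_unsolved]
      refine ⟨varInProb_cons.mpr (Or.inl (Or.inl has)), fun h => ?_⟩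
      rcases solvedVar_cons.mp h with ⟨t, he, hvt, -⟩ | ⟨h1, -, -⟩
      · rw [Prod.mk.injEq] at he
        exact absurd (he.2 ▸ has) hvt
      · exact h1 has
    have hnotA : a ∉ unsolved P := by
      rw [mem_unsolved]; exact fun h => h.2 hsolA
    exact mlt1 (card_lt_of_mem_not_mem hsub haB hnotA)
  · push_neg at hex
    have hstk : stuck P ⊆ stuck ((s, s) ::ₘ P) := by
      intro a ha
      have hS := mem_stuck.mp ha
      have hns : ¬ Tm.HasVar a s := hex a ha
      exact mem_stuck.mpr ((stuckIn_cons_of_not hns hns).mpr hS)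
    refine mlt3 (Finset.card_le_card hsub) (Finset.card_le_card hstk) ?_
    exact ⟨wEq (s, s), 0, Mw P, by simp [Mw], (zero_add _).symm, by simp⟩

theorem meas_swap (u : Tm F V) (x : V) (P : Multiset (Eqn F V)) (hu : u.NonVar) :
    MeasLt (meas ((Tm.var x, u) ::ₘ P)) (meas ((u, Tm.var x) ::ₘ P)) := by
  have hv : ∀ z, VarInProb z ((Tm.var x, u) ::ₘ P) → VarInProb z ((u, Tm.var x) ::ₘ P) := by
    intro z h
    rw [varInProb_cons] at h ⊢
    tauto
  have hs : ∀ z, VarInProb z ((Tm.var x, u) ::ₘ P) →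
      SolvedVar z ((u, Tm.var x) ::ₘ P) → SolvedVar z ((Tm.var x, u) ::ₘ P) := by
    intro z _ h
    rcases solvedVar_cons.mp h with ⟨t, he, -, -⟩ | ⟨h1, h2, h⟩
    · rw [Prod.mk.injEq] at he
      exact absurd rfl ((he.1 ▸ hu) z)
    · exact solvedVar_cons.mpr (Or.inr ⟨h2, h1, h⟩)
  have hsub := unsolved_subset hv hs
  have hstk : stuck ((Tm.var x, u) ::ₘ P) ⊆ stuck ((u, Tm.var x) ::ₘ P) := by
    intro a ha
    rw [mem_stuck] at ha ⊢
    rcases stuckIn_cons.mp ha with ⟨b, -, he, -⟩ | ⟨h1, h2, h⟩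
    · rw [Prod.mk.injEq] at he
      exact absurd rfl ((he.2 ▸ hu) b)
    · exact stuckIn_cons.mpr (Or.inr ⟨h2, h1, h⟩)
  have hM : Mw ((Tm.var x, u) ::ₘ P) = Mw ((u, Tm.var x) ::ₘ P) := by
    simp [Mw, wEq]
  have h3 : n3 ((Tm.var x, u) ::ₘ P) < n3 ((u, Tm.var x) ::ₘ P) := by
    simp [n3, Multiset.countP_cons, isVarB_eq_false hu]
  simp only [meas]
  rw [hM]
  exact mlt4 (Finset.card_le_card hsub) (Finset.card_le_card hstk) h3


theorem solvedVar_substProb {z x : V} {s : Tm F V} {P : Multiset (Eqn F V)}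
    (hzx : z ≠ x) (hzs : ¬ Tm.HasVar z s) (h : SolvedVar z P) :
    SolvedVar z (substProb x s P) := by
  obtain ⟨t, R, rfl, hvt, hvR⟩ := h
  refine ⟨t.subst (single x s), substProb x s R, by simp [substProb_cons, single, hzx], ?_, ?_⟩
  · intro hc
    rcases Tm.hasVar_subst.mp hc with ⟨h1, -⟩ | ⟨-, h2⟩
    exacts [hvt h1, hzs h2]
  · intro hc
    rcases varInProb_substProb.mp hc with ⟨h1, -⟩ | ⟨-, h2⟩
    exacts [hvR h1, hzs h2]

theorem not_varInProb_substProb {x : V} {s : Tm F V} {P : Multiset (Eqn F V)}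
    (hxs : ¬ Tm.HasVar x s) : ¬ VarInProb x (substProb x s P) := by
  intro h
  rcases varInProb_substProb.mp h with ⟨-, h⟩ | ⟨-, h⟩
  exacts [h rfl, hxs h]

theorem meas_choose (x y : V) (P : Multiset (Eqn F V))
    (hx : ¬ VarInProb x P) (hy : VarInProb y P) :
    MeasLt (meas ((Tm.var x, Tm.var y) ::ₘ P)) (meas ((Tm.var y, Tm.var x) ::ₘ P)) := by
  have hxy : x ≠ y := fun h => hx (h ▸ hy)
  have hv : ∀ z, VarInProb z ((Tm.var x, Tm.var y) ::ₘ P) →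
      VarInProb z ((Tm.var y, Tm.var x) ::ₘ P) := by
    intro z h
    rw [varInProb_cons] at h ⊢
    tauto
  have hs : ∀ z, VarInProb z ((Tm.var x, Tm.var y) ::ₘ P) →
      SolvedVar z ((Tm.var y, Tm.var x) ::ₘ P) →
      SolvedVar z ((Tm.var x, Tm.var y) ::ₘ P) := by
    intro z _ h
    rcases solvedVar_cons.mp h with ⟨t, he, hvt, hvP⟩ | ⟨h1, h2, hS⟩
    · rw [Prod.mk.injEq] at he
      obtain ⟨h1, rfl⟩ := he
      injection h1 with h1
      subst h1
      exact absurd hy hvP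
    · exact solvedVar_cons.mpr (Or.inr ⟨h2, h1, hS⟩)
  have hxB : x ∈ unsolved ((Tm.var y, Tm.var x) ::ₘ P) := by
    rw [mem_unsolved]
    refine ⟨varInProb_cons.mpr (Or.inl (Or.inr Tm.HasVar.var)), fun h => ?_⟩
    rcases solvedVar_cons.mp h with ⟨t, he, -, -⟩ | ⟨-, h2, -⟩
    · rw [Prod.mk.injEq] at he
      injection he.1 with h1
      exact hxy (h1.symm ▸ rfl)
    · exact h2 Tm.HasVar.var
  have hxA : x ∉ unsolved ((Tm.var x, Tm.var y) ::ₘ P) := by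
    rw [mem_unsolved]
    refine fun h => h.2 ⟨Tm.var y, P, rfl, ?_, hx⟩
    simp [Tm.hasVar_var, hxy]
  exact mlt1 (card_lt_of_mem_not_mem (unsolved_subset hv hs) hxB hxA)

theorem meas_coalesce (x y : V) (P : Multiset (Eqn F V)) (hxy : x ≠ y)
    (hx : VarInProb x P) (hy : VarInProb y P) :
    MeasLt (meas ((Tm.var x, Tm.var y) ::ₘ substProb x (Tm.var y) P))
      (meas ((Tm.var x, Tm.var y) ::ₘ P)) := by
  have hxynv : ¬ Tm.HasVar x (Tm.var y : Tm F V) := by simp [Tm.hasVar_var, hxy]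
  have hv : ∀ z, VarInProb z ((Tm.var x, Tm.var y) ::ₘ substProb x (Tm.var y) P) →
      VarInProb z ((Tm.var x, Tm.var y) ::ₘ P) := by
    intro z h
    rw [varInProb_cons] at h ⊢
    rcases h with h | h
    · exact Or.inl h
    · rcases varInProb_substProb.mp h with ⟨h1, -⟩ | ⟨-, h2⟩
      · exact Or.inr h1
      · have := Tm.hasVar_var.mp h2
        subst this
        exact Or.inr hy
  have hs : ∀ z, VarInProb z ((Tm.var x, Tm.var y) ::ₘ substProb x (Tm.var y) P) →
      SolvedVar z ((Tm.var x, Tm.var y) ::ₘ P) →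
      SolvedVar z ((Tm.var x, Tm.var y) ::ₘ substProb x (Tm.var y) P) := by
    intro z _ h
    rcases solvedVar_cons.mp h with ⟨t, he, hvt, hvP⟩ | ⟨h1, h2, hS⟩
    · rw [Prod.mk.injEq] at he
      injection he.1 with h1
      subst h1
      exact absurd hx hvP
    · have hzx : z ≠ x := fun hc => h1 (hc ▸ Tm.HasVar.var)
      have hzy : ¬ Tm.HasVar z (Tm.var y) := h2
      exact solvedVar_cons.mpr (Or.inr ⟨h1, h2, solvedVar_substProb hzx hzy hS⟩)
  have hxB : x ∈ unsolved ((Tm.var x, Tm.var y) ::ₘ P) := by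
    rw [mem_unsolved]
    refine ⟨varInProb_cons.mpr (Or.inl (Or.inl Tm.HasVar.var)), fun h => ?_⟩
    rcases solvedVar_cons.mp h with ⟨t, he, -, hvP⟩ | ⟨h1, -, -⟩
    · exact hvP hx
    · exact h1 Tm.HasVar.var
  have hxA : x ∉ unsolved ((Tm.var x, Tm.var y) ::ₘ substProb x (Tm.var y) P) := by
    rw [mem_unsolved]
    exact fun h => h.2 ⟨Tm.var y, _, rfl, hxynv, not_varInProb_substProb hxynv⟩
  exact mlt1 (card_lt_of_mem_not_mem (unsolved_subset hv hs) hxB hxA)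

theorem meas_replace (x : V) (s : Tm F V) (P : Multiset (Eqn F V))
    (hxs : ¬ Tm.HasVar x s) (hxP : VarInProb x P) :
    MeasLt (meas ((Tm.var x, s) ::ₘ substProb x s P)) (meas ((Tm.var x, s) ::ₘ P)) := by
  have hv : ∀ z, VarInProb z ((Tm.var x, s) ::ₘ substProb x s P) →
      VarInProb z ((Tm.var x, s) ::ₘ P) := by
    intro z h
    rw [varInProb_cons] at h ⊢
    rcases h with h | h
    · exact Or.inl h
    · rcases varInProb_substProb.mp h with ⟨h1, -⟩ | ⟨-, h2⟩
      · exact Or.inr h1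
      · exact Or.inl (Or.inr h2)
  have hs : ∀ z, VarInProb z ((Tm.var x, s) ::ₘ substProb x s P) →
      SolvedVar z ((Tm.var x, s) ::ₘ P) →
      SolvedVar z ((Tm.var x, s) ::ₘ substProb x s P) := by
    intro z _ h
    rcases solvedVar_cons.mp h with ⟨t, he, hvt, hvP⟩ | ⟨h1, h2, hS⟩
    · rw [Prod.mk.injEq] at he
      injection he.1 with h1
      subst h1
      exact absurd hxP hvP
    · have hzx : z ≠ x := fun hc => h1 (hc ▸ Tm.HasVar.var)
      exact solvedVar_cons.mpr (Or.inr ⟨h1, h2, solvedVar_substProb hzx h2 hS⟩)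
  have hxB : x ∈ unsolved ((Tm.var x, s) ::ₘ P) := by
    rw [mem_unsolved]
    refine ⟨varInProb_cons.mpr (Or.inl (Or.inl Tm.HasVar.var)), fun h => ?_⟩
    rcases solvedVar_cons.mp h with ⟨t, he, -, hvP⟩ | ⟨h1, -, -⟩
    · exact hvP hxP
    · exact h1 Tm.HasVar.var
  have hxA : x ∉ unsolved ((Tm.var x, s) ::ₘ substProb x s P) := by
    rw [mem_unsolved]
    exact fun h => h.2 ⟨s, _, rfl, hxs, not_varInProb_substProb hxs⟩
  exact mlt1 (card_lt_of_mem_not_mem (unsolved_subset hv hs) hxB hxA)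


theorem meas_merge (x : V) (s t : Tm F V) (P : Multiset (Eqn F V))
    (hs0 : 0 < s.size) (hst : s.size ≤ t.size) :
    MeasLt (meas ((Tm.var x, s) ::ₘ (s, t) ::ₘ P))
      (meas ((Tm.var x, s) ::ₘ (Tm.var x, t) ::ₘ P)) := by
  have snv : s.NonVar := Tm.size_pos_nonVar hs0
  have tnv : t.NonVar := Tm.size_pos_nonVar (lt_of_lt_of_le hs0 hst)
  have hv : ∀ z, VarInProb z ((Tm.var x, s) ::ₘ (s, t) ::ₘ P) →
      VarInProb z ((Tm.var x, s) ::ₘ (Tm.var x, t) ::ₘ P) := by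
    intro z h
    rw [varInProb_cons, varInProb_cons] at h ⊢
    tauto
  have hs : ∀ z, VarInProb z ((Tm.var x, s) ::ₘ (s, t) ::ₘ P) →
      SolvedVar z ((Tm.var x, s) ::ₘ (Tm.var x, t) ::ₘ P) →
      SolvedVar z ((Tm.var x, s) ::ₘ (s, t) ::ₘ P) := by
    intro z _ h
    rcases solvedVar_cons.mp h with ⟨t', he, hvt, hvP⟩ | ⟨h1, h2, hS⟩
    · rw [Prod.mk.injEq] at he
      injection he.1 with h1
      subst h1
      exact absurd (varInProb_cons.mpr (Or.inl (Or.inl Tm.HasVar.var))) hvP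
    · rcases solvedVar_cons.mp hS with ⟨t', he, -, -⟩ | ⟨h1', h2', hS'⟩
      · rw [Prod.mk.injEq] at he
        injection he.1 with hh
        subst hh
        exact absurd Tm.HasVar.var h1
      · exact solvedVar_cons.mpr (Or.inr ⟨h1, h2,
          solvedVar_cons.mpr (Or.inr ⟨h2, h2', hS'⟩)⟩)
  have hstk : stuck ((Tm.var x, s) ::ₘ (s, t) ::ₘ P) ⊆
      stuck ((Tm.var x, s) ::ₘ (Tm.var x, t) ::ₘ P) := by
    intro a ha
    rw [mem_stuck] at ha ⊢
    rcases stuckIn_cons.mp ha with ⟨b, -, he, -⟩ | ⟨h1, h2, hin⟩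
    · rw [Prod.mk.injEq] at he
      exact absurd he.2 (snv b)
    · rcases stuckIn_cons.mp hin with ⟨b, -, he, -⟩ | ⟨h1', h2', hS⟩
      · rw [Prod.mk.injEq] at he
        exact absurd he.1 (snv a)
      · exact stuckIn_cons.mpr (Or.inr ⟨h1, h2,
          stuckIn_cons.mpr (Or.inr ⟨h1, h2', hS⟩)⟩)
  have hM : Mw ((Tm.var x, s) ::ₘ (s, t) ::ₘ P) =
      Mw ((Tm.var x, s) ::ₘ (Tm.var x, t) ::ₘ P) := by
    simp [Mw, wEq, Nat.max_eq_right hst]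
  have h3eq : n3 ((Tm.var x, s) ::ₘ (s, t) ::ₘ P) =
      n3 ((Tm.var x, s) ::ₘ (Tm.var x, t) ::ₘ P) := by
    simp [n3, Multiset.countP_cons, isVarB_eq_false tnv]
  have h4 : n4 ((Tm.var x, s) ::ₘ (s, t) ::ₘ P) <
      n4 ((Tm.var x, s) ::ₘ (Tm.var x, t) ::ₘ P) := by
    simp [n4, Multiset.countP_cons, isVarB_eq_false snv]
  simp only [meas]
  rw [hM, h3eq]
  exact mlt5 (Finset.card_le_card (unsolved_subset hv hs)) (Finset.card_le_card hstk) h4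

theorem meas_merep (x y : V) (s : Tm F V) (P : Multiset (Eqn F V))
    (hxs : Tm.HasVar x s) (hsnv : s.NonVar) (hys : ¬ Tm.HasVar y s)
    (hyP : ¬ VarInProb y P) :
    MeasLt (meas ((Tm.var y, s) ::ₘ (Tm.var x, s) ::ₘ P))
      (meas ((Tm.var y, Tm.var x) ::ₘ (Tm.var x, s) ::ₘ P)) := by
  have hxy : y ≠ x := fun h => hys (h ▸ hxs)
  have hv : ∀ z, VarInProb z ((Tm.var y, s) ::ₘ (Tm.var x, s) ::ₘ P) →
      VarInProb z ((Tm.var y, Tm.var x) ::ₘ (Tm.var x, s) ::ₘ P) := by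
    intro z h
    rw [varInProb_cons, varInProb_cons] at h ⊢
    rcases h with (h | h) | h
    · exact Or.inl (Or.inl h)
    · exact Or.inr (Or.inl (Or.inr h))
    · exact Or.inr h
  have hs : ∀ z, VarInProb z ((Tm.var y, s) ::ₘ (Tm.var x, s) ::ₘ P) →
      SolvedVar z ((Tm.var y, Tm.var x) ::ₘ (Tm.var x, s) ::ₘ P) →
      SolvedVar z ((Tm.var y, s) ::ₘ (Tm.var x, s) ::ₘ P) := by
    intro z _ h
    rcases solvedVar_cons.mp h with ⟨t', he, hvt, hvP⟩ | ⟨h1, h2, hS⟩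
    · rw [Prod.mk.injEq] at he
      injection he.1 with hh
      subst hh
      exact ⟨s, (Tm.var x, s) ::ₘ P, rfl, hys, hvP⟩
    · rcases solvedVar_cons.mp hS with ⟨t', he, -, -⟩ | ⟨h1', h2', hS'⟩
      · rw [Prod.mk.injEq] at he
        injection he.1 with hh
        subst hh
        exact absurd Tm.HasVar.var h2
      · exact solvedVar_cons.mpr (Or.inr ⟨h1, h2',
          solvedVar_cons.mpr (Or.inr ⟨h2, h2', hS'⟩)⟩)
  have hstk : stuck ((Tm.var y, s) ::ₘ (Tm.var x, s) ::ₘ P) ⊆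
      stuck ((Tm.var y, Tm.var x) ::ₘ (Tm.var x, s) ::ₘ P) := by
    intro a ha
    rw [mem_stuck] at ha ⊢
    rcases stuckIn_cons.mp ha with ⟨b, -, he, -⟩ | ⟨h1, h2, hin⟩
    · rw [Prod.mk.injEq] at he
      exact absurd he.2 (hsnv b)
    · rcases stuckIn_cons.mp hin with ⟨b, -, he, -⟩ | ⟨h1', h2', hS⟩
      · rw [Prod.mk.injEq] at he
        exact absurd he.2 (hsnv b)
      · exact stuckIn_cons.mpr (Or.inr ⟨h1, h1',
          stuckIn_cons.mpr (Or.inr ⟨h1', h2', hS⟩)⟩)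
  have hyB : y ∈ stuck ((Tm.var y, Tm.var x) ::ₘ (Tm.var x, s) ::ₘ P) := by
    rw [mem_stuck]
    refine ⟨x, (Tm.var x, s) ::ₘ P, hxy, rfl, not_varInProb_cons.mpr ⟨?_, hys, hyP⟩⟩
    simp [Tm.hasVar_var, hxy]
  have hyA : y ∉ stuck ((Tm.var y, s) ::ₘ (Tm.var x, s) ::ₘ P) := by
    rw [mem_stuck]
    intro h
    rcases stuckIn_cons.mp h with ⟨b, -, he, -⟩ | ⟨h1, -, -⟩
    · rw [Prod.mk.injEq] at he
      exact absurd he.2 (hsnv b)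
    · exact h1 Tm.HasVar.var
  exact mlt2 (Finset.card_le_card (unsolved_subset hv hs))
    (card_lt_of_mem_not_mem hstk hyB hyA)

theorem meas_decomp (f : F) (ss ts : List (Tm F V)) (P : Multiset (Eqn F V))
    (hlen : ss.length = ts.length) :
    MeasLt (meas (((ss.zip ts : List (Eqn F V)) : Multiset (Eqn F V)) + P))
      (meas ((Tm.app f ss, Tm.app f ts) ::ₘ P)) := by
  have hzip : ∀ z, VarInProb z ((ss.zip ts : List (Eqn F V)) : Multiset (Eqn F V)) ↔
      (Tm.HasVar z (Tm.app f ss) ∨ Tm.HasVar z (Tm.app f ts)) := by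
    intro z
    rw [varInProb_zip hlen, Tm.hasVar_app, Tm.hasVar_app]
  have hv : ∀ z, VarInProb z (((ss.zip ts : List (Eqn F V)) : Multiset (Eqn F V)) + P) →
      VarInProb z ((Tm.app f ss, Tm.app f ts) ::ₘ P) := by
    intro z h
    rcases varInProb_add.mp h with h | h
    · exact varInProb_cons.mpr (Or.inl ((hzip z).mp h))
    · exact varInProb_cons.mpr (Or.inr h)
  have hs : ∀ z, VarInProb z (((ss.zip ts : List (Eqn F V)) : Multiset (Eqn F V)) + P) →
      SolvedVar z ((Tm.app f ss, Tm.app f ts) ::ₘ P) →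
      SolvedVar z (((ss.zip ts : List (Eqn F V)) : Multiset (Eqn F V)) + P) := by
    intro z _ h
    rcases solvedVar_cons.mp h with ⟨t', he, -, -⟩ | ⟨h1, h2, hS⟩
    · rw [Prod.mk.injEq] at he
      exact nomatch he.1
    · have hZ : ¬ VarInProb z ((ss.zip ts : List (Eqn F V)) : Multiset (Eqn F V)) := by
        intro hc
        rcases (hzip z).mp hc with hc | hc
        exacts [h1 hc, h2 hc]
      exact (solvedVar_add_of_not hZ).mpr hS
  have hsub := unsolved_subset hv hs
  by_cases hex : ∃ a ∈ stuck (((ss.zip ts : List (Eqn F V)) : Multiset (Eqn F V)) + P),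
      (Tm.HasVar a (Tm.app f ss) ∨ Tm.HasVar a (Tm.app f ts))
  · obtain ⟨a, haA, hv2⟩ := hex
    have hsolA := stuckIn_solvedVar (mem_stuck.mp haA)
    have haB : a ∈ unsolved ((Tm.app f ss, Tm.app f ts) ::ₘ P) := by
      rw [mem_unsolved]
      refine ⟨varInProb_cons.mpr (Or.inl hv2), fun h => ?_⟩
      rcases solvedVar_cons.mp h with ⟨t', he, -, -⟩ | ⟨h1, h2, -⟩
      · rw [Prod.mk.injEq] at he
        exact nomatch he.1
      · rcases hv2 with hv2 | hv2
        exacts [h1 hv2, h2 hv2]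
    have hnA : a ∉ unsolved (((ss.zip ts : List (Eqn F V)) : Multiset (Eqn F V)) + P) := by
      rw [mem_unsolved]
      exact fun h => h.2 hsolA
    exact mlt1 (card_lt_of_mem_not_mem hsub haB hnA)
  · push_neg at hex
    have hstk : stuck (((ss.zip ts : List (Eqn F V)) : Multiset (Eqn F V)) + P) ⊆
        stuck ((Tm.app f ss, Tm.app f ts) ::ₘ P) := by
      intro a ha
      have hS := mem_stuck.mp ha
      obtain ⟨h1, h2⟩ := hex a ha
      have hZ : ¬ VarInProb a ((ss.zip ts : List (Eqn F V)) : Multiset (Eqn F V)) := by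
        intro hc
        rcases (hzip a).mp hc with hc | hc
        exacts [h1 hc, h2 hc]
      exact mem_stuck.mpr (stuckIn_cons.mpr (Or.inr ⟨h1, h2, (stuckIn_add_of_not hZ).mp hS⟩))
    refine mlt3 (Finset.card_le_card hsub) (Finset.card_le_card hstk) ?_
    refine ⟨wEq (Tm.app f ss, Tm.app f ts),
      Mw ((ss.zip ts : List (Eqn F V)) : Multiset (Eqn F V)), Mw P,
      by simp [Mw], by simp [Mw], ?_⟩
    intro w hw
    rcases Multiset.mem_map.mp hw with ⟨e, he, rfl⟩
    obtain ⟨ha, hb⟩ := List.of_mem_zip (Multiset.mem_coe.mp he)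
    have h1 := Tm.size_lt_of_mem (f := f) ha
    have h2 := Tm.size_lt_of_mem (f := f) hb
    simp only [wEq]
    exact max_lt (lt_of_lt_of_le h1 (le_max_left _ _)) (lt_of_lt_of_le h2 (le_max_right _ _))


theorem meas_step {P Q : Multiset (Eqn F V)} (h : UStep P (some Q)) :
    MeasLt (meas Q) (meas P) := by
  cases h with
  | base h1 =>
    cases h1 with
    | remove s => exact meas_remove s Q
    | decomp f ss ts P hlen => exact meas_decomp f ss ts P hlen
    | choose x y P hx hy => exact meas_choose x y P hx hy
    | coalesce x y P hxy hx hy => exact meas_coalesce x y P hxy hx hy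
    | swap u x P hu => exact meas_swap u x P hu
    | merge x s t P h1 h2 => exact meas_merge x s t P h1 h2
    | replace x s P h1 h2 h3 => exact meas_replace x s P h1 h3
  | merep x y s P h1 h2 h3 h4 h5 => exact meas_merep x y s P h1 h2 h3 h4

end Aux4




/-- the unification transformation rules (Remove, Decomp, Conflict,
Choose, Coalesce, Swap, Merge, Replace, Merep) terminate on every finite
unification problem: the step relation (read from result to source) is
well-founded, so there is no infinite sequence of rule applications. -/
theorem unification_rules_terminate {F V : Type} [DecidableEq V] :
    WellFounded (fun Q P : Option (Multiset (Eqn F V)) =>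
      ∃ P', P = some P' ∧ UStep P' Q) := by
  have hnone : Acc (fun Q P : Option (Multiset (Eqn F V)) =>
      ∃ P', P = some P' ∧ UStep P' Q) none := by
    constructor
    rintro R ⟨R', hR, -⟩
    exact nomatch hR
  constructor
  intro o
  have hacc : ∀ P : Multiset (Eqn F V), Acc (fun Q P : Option (Multiset (Eqn F V)) =>
      ∃ P', P = some P' ∧ UStep P' Q) (some P) := by
    intro P
    have hP : Acc (InvImage MeasLt meas) P := (InvImage.wf meas measLt_wf).apply P
    induction hP with
    | intro P hP ih =>
      constructor
      rintro Q ⟨P', hPeq, hQ⟩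
      injection hPeq with hPeq
      subst hPeq
      cases Q with
      | none => exact hnone
      | some Q' => exact ih Q' (meas_step hQ)
  cases o with
  | none => exact hnone
  | some P => exact hacc P
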